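/- Upper transient bound via dominance: let F : B^V → B^V be a Boolean network, U a dominant set of depth d, 𝓕 the induced automata network and h the eventual conjugacy (satisfying h∘F = 𝓕∘h and: whenever F^t(x)_U = F^t(x')_U for d+1 consecutive times starting at t₀, then F^t(x) = F^t(x') for all t ≥ t₀ + d). Then for every x, τ_F(x) ≤ τ_𝓕(h(x)) + d, where τ denotes the transient time (the first time the orbit is periodic). -/
import Mathlib

/-- Any point of a finite system is eventually periodic. -/
lemma aux_eventually_periodic {Y : Type*} [Finite Y] (G : Y → Y) (y : Y) :
    ∃ m : ℕ, G^[m] y ∈ Function.periodicPts G := by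
  obtain ⟨a, b, hne, hab⟩ := Finite.exists_ne_map_eq_of_infinite (fun n : ℕ => G^[n] y)
  rcases lt_or_gt_of_ne hne with hlt | hlt
  · exact ⟨a, (b - a), by omega, by
      simp [Function.IsPeriodicPt, Function.IsFixedPt, ← Function.iterate_add_apply]
      rw [show b - a + a = b by omega]; exact hab.symm⟩
  · exact ⟨b, (a - b), by omega, by
      simp [Function.IsPeriodicPt, Function.IsFixedPt, ← Function.iterate_add_apply]
      rw [show a - b + b = a by omega]; exact hab⟩

/-- Upper transient bound: if the semiconjugacy `h` is `d`-synchronizing, then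
`τ_F(x) ≤ τ_G(h x) + d`. -/
theorem stmt_14 {X Y : Type*} [Finite X] [Finite Y] (F : X → X) (G : Y → Y)
    (h : X → Y) (d : ℕ) (hcomm : ∀ x, h (F x) = G (h x))
    (hsync : ∀ x x' : X, ∀ t₀ : ℕ,
      (∀ t, t₀ ≤ t → t ≤ t₀ + d → h (F^[t] x) = h (F^[t] x')) →
        ∀ t, t₀ + d ≤ t → F^[t] x = F^[t] x')
    (x : X) :
    sInf {t : ℕ | F^[t] x ∈ Function.periodicPts F} ≤
      sInf {t : ℕ | G^[t] (h x) ∈ Function.periodicPts G} + d := by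
  have hsemi : Function.Semiconj h F G := hcomm
  have hiter : ∀ t, h (F^[t] x) = G^[t] (h x) := fun t => (hsemi.iterate_right t) x
  set τ := sInf {t : ℕ | G^[t] (h x) ∈ Function.periodicPts G} with hτ
  have hne : {t : ℕ | G^[t] (h x) ∈ Function.periodicPts G}.Nonempty :=
    aux_eventually_periodic G (h x)
  have hmem : G^[τ] (h x) ∈ Function.periodicPts G := Nat.sInf_mem hne
  obtain ⟨P, hP, hper⟩ := hmem
  -- G^[t+P] (h x) = G^[t] (h x) for t ≥ τ
  have hGper : ∀ t, τ ≤ t → G^[t + P] (h x) = G^[t] (h x) := by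
    intro t ht
    have : G^[t + P] (h x) = G^[t - τ] (G^[P] (G^[τ] (h x))) := by
      rw [← Function.iterate_add_apply, ← Function.iterate_add_apply]
      congr 1; omega
    rw [this, hper, ← Function.iterate_add_apply]
    congr 1; omega
  have hkey : ∀ t, τ + d ≤ t → F^[t] x = F^[t] (F^[P] x) := by
    apply hsync x (F^[P] x) τ
    intro t ht1 ht2
    rw [hiter, ← Function.iterate_add_apply, hiter, hGper t ht1]
  apply Nat.sInf_le
  refine ⟨P, hP, ?_⟩
  show Function.IsPeriodicPt F P (F^[τ + d] x)
  have : F^[τ + d + P] x = F^[τ + d] x := by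
    rw [Function.iterate_add_apply]; exact (hkey _ le_rfl).symm
  unfold Function.IsPeriodicPt Function.IsFixedPt
  rw [← Function.iterate_add_apply, Nat.add_comm P (τ + d), this]
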